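/- arXiv:2205.15318 — 17 statements merged into one kernel-verified Lean document; each statement's English description precedes it below -/
import Mathlib

section
/- Let R be a commutative ring, S a multiplicative subset of R, and I an ideal of R with I ∩ S = ∅. Then I is an S-prime ideal of R if and only if there exists s ∈ S such that the ideal (I : s) = {x ∈ R | s*x ∈ I} is a prime ideal of R. -/
/-- An ideal `I` of a commutative ring `R`, disjoint from a multiplicative subset `S`,
is `S`-prime iff there is `s ∈ S` such that the ideal `(I : s) = {x | s*x ∈ I}` is prime. -/
theorem stmt_0 {R : Type*} [CommRing R] (S : Submonoid R) (I : Ideal R)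
    (hdisj : (I : Set R) ∩ (S : Set R) = ∅) :
    (∃ s ∈ S, ∀ x y : R, x * y ∈ I → s * x ∈ I ∨ s * y ∈ I) ↔
      ∃ s ∈ S, ∃ J : Ideal R, (∀ x : R, x ∈ J ↔ s * x ∈ I) ∧ J.IsPrime := by
  constructor
  · rintro ⟨s, hs, h⟩
    let J : Ideal R :=
      { carrier := {x | s * s * x ∈ I},
        zero_mem' := by simp,
        add_mem' := fun {a b} ha hb => by
          simpa [mul_add] using I.add_mem ha hb,
        smul_mem' := fun c {x} hx => by
          simp only [Set.mem_setOf_eq, smul_eq_mul] at *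
          have := I.mul_mem_left c hx
          convert this using 1; ring }
    refine ⟨s * s, mul_mem hs hs, J, fun x => Iff.rfl, ?_⟩
    constructor
    · intro htop
      have h1 : s * s * 1 ∈ I := by
        have : (1 : R) ∈ (⊤ : Ideal R) := trivial
        rw [← htop] at this; exact this
      have : s * s ∈ (I : Set R) ∩ (S : Set R) := ⟨by simpa using h1, mul_mem hs hs⟩
      rw [hdisj] at this; exact this.elim
    · intro x y hxy
      have hxy' : (s * x) * (s * y) ∈ I := by
        have : s * s * (x * y) ∈ I := hxy
        convert this using 1; ring
      rcases h (s * x) (s * y) hxy' with h1 | h1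
      · left; show s * s * x ∈ I; convert h1 using 1; ring
      · right; show s * s * y ∈ I; convert h1 using 1; ring
  · rintro ⟨s, hs, J, hJ, hp⟩
    refine ⟨s, hs, fun x y hxy => ?_⟩
    have : x * y ∈ J := by
      rw [hJ]; exact I.mul_mem_left s hxy
    rcases hp.mem_or_mem this with h | h
    · left; exact (hJ x).mp h
    · right; exact (hJ y).mp h
end

section
/- Let R be a commutative ring, S a multiplicative subset of R, I an ideal of R, and let P₁, ..., Pₙ be finitely many S-prime ideals of R. If I ⊆ P₁ ∪ ... ∪ Pₙ, then there exist an index i and an element s ∈ S such that s*x ∈ Pᵢ for every x ∈ I. -/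
/-- If an ideal `I` is contained in a finite union of `S`-prime ideals `P i`, then there
exist an index `i` and `s ∈ S` such that `s * x ∈ P i` for all `x ∈ I`. -/
theorem stmt_2 {R : Type*} [CommRing R] (S : Submonoid R) (I : Ideal R)
    (n : ℕ) (P : Fin n → Ideal R)
    (hdisj : ∀ i, ((P i : Ideal R) : Set R) ∩ (S : Set R) = ∅)
    (hSprime : ∀ i, ∃ s ∈ S, ∀ x y : R, x * y ∈ P i → s * x ∈ P i ∨ s * y ∈ P i)
    (hsub : (I : Set R) ⊆ ⋃ i, ((P i : Ideal R) : Set R)) :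
    ∃ i, ∃ s ∈ S, ∀ x ∈ I, s * x ∈ P i := by
  -- handle n = 0
  rcases n with _ | m
  · obtain ⟨i, -⟩ := Set.mem_iUnion.mp (hsub I.zero_mem)
    exact i.elim0
  -- choose witnesses
  choose s hsS hs using hSprime
  have hdisj' : ∀ i, ∀ a ∈ P i, a ∉ S := by
    intro i a ha haS
    exact Set.eq_empty_iff_forall_notMem.mp (hdisj i) a ⟨ha, haS⟩
  -- the saturation ideals
  set Q : Fin (m+1) → Ideal R := fun i =>
    { carrier := {x | ∃ k : ℕ, s i ^ k * x ∈ P i}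
      add_mem' := by
        rintro a b ⟨k, hk⟩ ⟨l, hl⟩
        refine ⟨k + l, ?_⟩
        have : s i ^ (k + l) * (a + b)
            = s i ^ l * (s i ^ k * a) + s i ^ k * (s i ^ l * b) := by ring
        rw [this]
        exact (P i).add_mem ((P i).mul_mem_left _ hk) ((P i).mul_mem_left _ hl)
      zero_mem' := ⟨0, by simp⟩
      smul_mem' := by
        rintro c a ⟨k, hk⟩
        refine ⟨k, ?_⟩
        have : s i ^ k * (c • a) = c * (s i ^ k * a) := by simp [smul_eq_mul]; ring
        rw [this]
        exact (P i).mul_mem_left _ hk } with hQ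
  have hQmem : ∀ i x, x ∈ Q i ↔ ∃ k : ℕ, s i ^ k * x ∈ P i := fun i x => Iff.rfl
  -- key reduction: x ∈ Q i → s i * x ∈ P i
  have hkey : ∀ i x, x ∈ Q i → s i * x ∈ P i := by
    intro i x hx
    obtain ⟨k, hk⟩ := (hQmem i x).mp hx
    have := hs i x (s i ^ k) (by rwa [mul_comm])
    rcases this with h | h
    · exact h
    · exact absurd h (fun hP => hdisj' i _ hP
        (by simpa [pow_succ'] using pow_mem (hsS i) (k+1)))
  -- each Q i is prime
  have hprime : ∀ i, (Q i).IsPrime := by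
    intro i
    constructor
    · intro htop
      have h1 : (1 : R) ∈ Q i := htop ▸ Submodule.mem_top
      obtain ⟨k, hk⟩ := (hQmem i 1).mp h1
      rw [mul_one] at hk
      exact hdisj' i _ hk (pow_mem (hsS i) k)
    · intro x y hxy
      obtain ⟨k, hk⟩ := (hQmem i _).mp hxy
      have hk' : (s i ^ k * x) * y ∈ P i := by rw [mul_assoc]; exact hk
      rcases hs i _ _ hk' with h | h
      · left
        exact (hQmem i x).mpr ⟨k + 1, by rw [pow_succ]; ring_nf; ring_nf at h; exact h⟩
      · right
        exact (hQmem i y).mpr ⟨1, by simpa using h⟩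
  -- I ⊆ ⋃ Q i
  have hsub' : (I : Set R) ⊆ ⋃ i ∈ (Finset.univ : Finset (Fin (m+1))), ((Q i : Ideal R) : Set R) := by
    intro x hx
    obtain ⟨i, hi⟩ := Set.mem_iUnion.mp (hsub hx)
    simp only [Set.mem_iUnion]
    exact ⟨i, Finset.mem_univ i, (hQmem i x).mpr ⟨0, by simpa using hi⟩⟩
  obtain ⟨i, -, hIQ⟩ := (Ideal.subset_union_prime (0 : Fin (m+1)) 0
    (fun i _ _ _ => hprime i)).mp hsub'
  exact ⟨i, s i, hsS i, fun x hx => hkey i x (hIQ hx)⟩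
end

section
/- Let R be a commutative ring, S a multiplicative subset of R, and I an ideal of R with I ∩ S = ∅. Then I is an S-prime ideal of R if and only if there exists s ∈ S such that for all ideals J and K of R, J*K ⊆ I implies that s*x ∈ I for all x ∈ J, or s*y ∈ I for all y ∈ K. -/
/-- `I` is `S`-prime iff there exists `s ∈ S` such that for all ideals `J`, `K`,
`J*K ⊆ I` implies `s*J ⊆ I` or `s*K ⊆ I`. -/
theorem stmt_3 {R : Type*} [CommRing R] (S : Submonoid R) (I : Ideal R)
    (hdisj : (I : Set R) ∩ (S : Set R) = ∅) :
    (∃ s ∈ S, ∀ x y : R, x * y ∈ I → s * x ∈ I ∨ s * y ∈ I) ↔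
      ∃ s ∈ S, ∀ J K : Ideal R, J * K ≤ I →
        (∀ x ∈ J, s * x ∈ I) ∨ (∀ y ∈ K, s * y ∈ I) := by
  constructor
  · rintro ⟨s, hs, h⟩
    refine ⟨s, hs, fun J K hJK => ?_⟩
    by_contra hc
    push_neg at hc
    obtain ⟨⟨x, hx, hsx⟩, ⟨y, hy, hsy⟩⟩ := hc
    have hxy : x * y ∈ I := hJK (Ideal.mul_mem_mul hx hy)
    rcases h x y hxy with h' | h' <;> [exact hsx h'; exact hsy h']
  · rintro ⟨s, hs, h⟩
    refine ⟨s, hs, fun x y hxy => ?_⟩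
    have hJK : Ideal.span {x} * Ideal.span {y} ≤ I := by
      rw [Ideal.span_singleton_mul_span_singleton]
      exact Ideal.span_le.mpr (Set.singleton_subset_iff.mpr hxy)
    rcases h _ _ hJK with h' | h'
    · exact Or.inl (h' x (Ideal.mem_span_singleton_self x))
    · exact Or.inr (h' y (Ideal.mem_span_singleton_self y))
end

section
/- Let R be a commutative ring, S a multiplicative subset of R, and I an S-prime ideal of R. If J is an ideal of R with J ⊆ I, then there exists s ∈ S such that s*x ∈ I for every x in the radical √J of J. -/
private lemma aux_stmt4 {R : Type*} [CommRing R] (S : Submonoid R) (I : Ideal R)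
    (hdisj : (I : Set R) ∩ (S : Set R) = ∅)
    (s : R) (hs : s ∈ S) (hp : ∀ x y : R, x * y ∈ I → s * x ∈ I ∨ s * y ∈ I) :
    ∀ m k : ℕ, ∀ x : R, s ^ k * x ^ (m + 1) ∈ I → s * x ∈ I := by
  intro m
  induction m with
  | zero =>
    intro k x hx
    rcases hp x (s ^ k) (by rwa [mul_comm, pow_one] at hx) with h | h
    · exact h
    · exfalso
      have hmem : s ^ (k + 1) ∈ (I : Set R) ∩ (S : Set R) := by
        constructor
        · simpa [pow_succ, mul_comm] using h
        · exact pow_mem hs _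
      simp [hdisj] at hmem
  | succ m ih =>
    intro k x hx
    rcases hp (s ^ k * x ^ (m + 1)) x (by rw [mul_assoc, ← pow_succ]; exact hx) with h | h
    · exact ih (k + 1) x (by rw [pow_succ]; ring_nf; ring_nf at h; exact h)
    · exact h

/-- If `I` is an `S`-prime ideal and `J ⊆ I`, then there exists `s ∈ S` with
`s * x ∈ I` for every `x` in the radical of `J`. -/
theorem stmt_4 {R : Type*} [CommRing R] (S : Submonoid R) (I : Ideal R)
    (hdisj : (I : Set R) ∩ (S : Set R) = ∅)
    (hSprime : ∃ s ∈ S, ∀ x y : R, x * y ∈ I → s * x ∈ I ∨ s * y ∈ I)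
    (J : Ideal R) (hJI : J ≤ I) :
    ∃ s ∈ S, ∀ x ∈ J.radical, s * x ∈ I := by
  obtain ⟨s, hs, hp⟩ := hSprime
  refine ⟨s, hs, ?_⟩
  intro x hx
  obtain ⟨n, hn⟩ := hx
  cases n with
  | zero =>
    exfalso
    have h1 : (1 : R) ∈ (I : Set R) ∩ (S : Set R) :=
      ⟨hJI (by simpa using hn), S.one_mem⟩
    simp [hdisj] at h1
  | succ n =>
    exact aux_stmt4 S I hdisj s hs hp n 0 x (by simpa using hJI hn)
end

section
/- Let R be a commutative ring, S a multiplicative subset of R, and let I₁, ..., Iₙ be finitely many S-prime ideals of R. Then there exists s ∈ S such that s*x ∈ I₁ ∩ ... ∩ Iₙ for every x in the radical √(I₁ ∩ ... ∩ Iₙ). -/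
lemma sprime_radical_aux {R : Type*} [CommRing R] (S : Submonoid R) (I : Ideal R)
    (hdisj : ((I : Ideal R) : Set R) ∩ (S : Set R) = ∅) (s : R) (hs : s ∈ S)
    (hp : ∀ x y : R, x * y ∈ I → s * x ∈ I ∨ s * y ∈ I) :
    ∀ x ∈ I.radical, s * x ∈ I := by
  have hSnotI : ∀ k : ℕ, s ^ k ∉ I := by
    intro k hk
    have : s ^ k ∈ ((I : Ideal R) : Set R) ∩ (S : Set R) := ⟨hk, pow_mem hs k⟩
    rw [hdisj] at this
    exact this
  have key : ∀ t k : ℕ, ∀ x : R, s ^ k * x ^ t ∈ I → s * x ∈ I := by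
    intro t
    induction t with
    | zero =>
      intro k x h
      rw [pow_zero, mul_one] at h
      exact absurd h (hSnotI k)
    | succ t ih =>
      intro k x h
      have h' : x * (s ^ k * x ^ t) ∈ I := by
        rw [show x * (s ^ k * x ^ t) = s ^ k * x ^ (t + 1) by ring]
        exact h
      rcases hp x (s ^ k * x ^ t) h' with h1 | h2
      · exact h1
      · apply ih (k + 1) x
        rw [show s ^ (k + 1) * x ^ t = s * (s ^ k * x ^ t) by ring]
        exact h2
  intro x hx
  obtain ⟨t, ht⟩ := hx
  apply key t 0 x
  rw [pow_zero, one_mul]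
  exact ht

/-- For finitely many `S`-prime ideals `I i`, there exists `s ∈ S` with
`s * x ∈ ⋂ i, I i` for every `x` in the radical of `⋂ i, I i`. -/
theorem stmt_5 {R : Type*} [CommRing R] (S : Submonoid R)
    (n : ℕ) (I : Fin n → Ideal R)
    (hdisj : ∀ i, ((I i : Ideal R) : Set R) ∩ (S : Set R) = ∅)
    (hSprime : ∀ i, ∃ s ∈ S, ∀ x y : R, x * y ∈ I i → s * x ∈ I i ∨ s * y ∈ I i) :
    ∃ s ∈ S, ∀ x ∈ (iInf I).radical, s * x ∈ iInf I := by
  choose f hfS hfp using hSprime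
  refine ⟨∏ i, f i, prod_mem fun i _ => hfS i, ?_⟩
  intro x hx
  rw [Ideal.mem_iInf]
  intro i
  have hxi : x ∈ (I i).radical := by
    refine Ideal.radical_mono ?_ hx
    exact iInf_le I i
  have h1 : f i * x ∈ I i := sprime_radical_aux S (I i) (hdisj i) (f i) (hfS i) (hfp i) x hxi
  have : (∏ j ∈ Finset.univ.erase i, f j) * (f i * x) ∈ I i := Ideal.mul_mem_left _ _ h1
  rw [show (∏ j ∈ Finset.univ.erase i, f j) * (f i * x)
      = (f i * ∏ j ∈ Finset.univ.erase i, f j) * x by ring,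
    Finset.mul_prod_erase _ _ (Finset.mem_univ i)] at this
  exact this
end

section
/- Let R₁ and R₂ be commutative rings, h : R₁ → R₂ a ring homomorphism, and S a multiplicative subset of R₁ such that 0 ∉ h(S). If I₂ is an h(S)-prime ideal of R₂ (where h(S) is the image of S under h, a multiplicative subset of R₂), then h⁻¹(I₂) is an S-prime ideal of R₁. -/
/-- If `h : R₁ → R₂` is a ring homomorphism, `S ⊆ R₁` multiplicative with `0 ∉ h(S)`,
and `I₂` is an `h(S)`-prime ideal of `R₂`, then `h⁻¹(I₂)` is an `S`-prime ideal of `R₁`. -/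
theorem stmt_6 {R₁ R₂ : Type*} [CommRing R₁] [CommRing R₂] (h : R₁ →+* R₂)
    (S : Submonoid R₁) (h0 : (0 : R₂) ∉ S.map h.toMonoidHom) (I₂ : Ideal R₂)
    (hdisj : (I₂ : Set R₂) ∩ ((S.map h.toMonoidHom : Submonoid R₂) : Set R₂) = ∅)
    (hSprime : ∃ s ∈ S.map h.toMonoidHom, ∀ x y : R₂,
      x * y ∈ I₂ → s * x ∈ I₂ ∨ s * y ∈ I₂) :
    ((I₂.comap h : Ideal R₁) : Set R₁) ∩ (S : Set R₁) = ∅ ∧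
      ∃ s ∈ S, ∀ x y : R₁, x * y ∈ I₂.comap h →
        s * x ∈ I₂.comap h ∨ s * y ∈ I₂.comap h := by
  constructor
  · ext a
    simp only [Set.mem_inter_iff, Set.mem_empty_iff_false, iff_false, not_and]
    intro ha haS
    have : h a ∈ (I₂ : Set R₂) ∩ ((S.map h.toMonoidHom : Submonoid R₂) : Set R₂) :=
      ⟨ha, ⟨a, haS, rfl⟩⟩
    rw [hdisj] at this
    exact this
  · obtain ⟨s₂, hs₂, hP⟩ := hSprime
    obtain ⟨s, hs, rfl⟩ := hs₂
    refine ⟨s, hs, fun x y hxy => ?_⟩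
    have := hP (h x) (h y) (by simpa [map_mul] using hxy)
    simpa [Ideal.mem_comap, map_mul] using this
end

section
/- Let R be a commutative ring and S a multiplicative subset of R. If I is an S-prime ideal of R with I ∩ S = ∅, then the ideal S⁻¹I generated by the image of I in the localization S⁻¹R (i.e., the pushforward of I along the canonical map R → S⁻¹R) is a prime ideal of S⁻¹R. -/
namespace IsLocalization

variable {R : Type*} [CommRing R] (S : Submonoid R) (A : Type*) [CommRing A] [Algebra R A]
  [IsLocalization S A] {I : Ideal R}

/-- The contraction of `S⁻¹I` is the `S`-saturation `{x | ∃ m ∈ S, m * x ∈ I}`; the witness `s`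
of `S`-primality absorbs the extra factor `m`, so this saturation is prime. -/
theorem isPrime_under_map_algebraMap_of_exists_mul_mem (hd : Disjoint (S : Set R) I)
    (hI : ∃ s ∈ S, ∀ x y : R, x * y ∈ I → s * x ∈ I ∨ s * y ∈ I) :
    ((I.map (algebraMap R A)).under R).IsPrime := by
  obtain ⟨s, hs, hprime⟩ := hI
  have hmem (x : R) : x ∈ (I.map (algebraMap R A)).under R ↔ ∃ m ∈ S, m * x ∈ I :=
    algebraMap_mem_map_algebraMap_iff S A I x
  refine ⟨Ideal.comap_ne_top _ ((map_algebraMap_ne_top_iff_disjoint S A I).2 hd),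
    fun {x y} hxy => ?_⟩
  obtain ⟨m, hm, hmxy⟩ := (hmem (x * y)).1 hxy
  rcases hprime (m * x) y (by rwa [← mul_assoc] at hmxy) with hmx | hy
  · exact Or.inl ((hmem x).2 ⟨s * m, S.mul_mem hs hm, by rwa [mul_assoc]⟩)
  · exact Or.inr ((hmem y).2 ⟨s, hs, hy⟩)

theorem isPrime_map_algebraMap_of_exists_mul_mem (hd : Disjoint (S : Set R) I)
    (hI : ∃ s ∈ S, ∀ x y : R, x * y ∈ I → s * x ∈ I ∨ s * y ∈ I) :
    (I.map (algebraMap R A)).IsPrime := by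
  rw [isPrime_iff_isPrime_disjoint S A]
  exact ⟨isPrime_under_map_algebraMap_of_exists_mul_mem S A hd hI,
    (disjoint_under_iff S A _).2 ((map_algebraMap_ne_top_iff_disjoint S A I).2 hd)⟩

end IsLocalization

/-- If `I` is an `S`-prime ideal of `R` disjoint from `S`, then `S⁻¹I` is a prime ideal
of the localization `S⁻¹R`. -/
theorem stmt_7 {R : Type*} [CommRing R] (S : Submonoid R) (I : Ideal R)
    (hdisj : (I : Set R) ∩ (S : Set R) = ∅)
    (hSprime : ∃ s ∈ S, ∀ x y : R, x * y ∈ I → s * x ∈ I ∨ s * y ∈ I) :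
    (I.map (algebraMap R (Localization S))).IsPrime :=
  IsLocalization.isPrime_map_algebraMap_of_exists_mul_mem S (Localization S)
    (Set.disjoint_iff_inter_eq_empty.2 hdisj).symm hSprime
end

section
/- Let R be a commutative ring, S a multiplicative subset of R, and I an ideal of R with I ∩ S = ∅. If the ideal S⁻¹I of the localization S⁻¹R is a prime ideal and the preimage of S⁻¹I under the canonical map R → S⁻¹R equals (I : s) = {x ∈ R | s*x ∈ I} for some s ∈ S, then I is an S-prime ideal of R. -/
/-- If `S⁻¹I` is a prime ideal of `S⁻¹R` and the preimage of `S⁻¹I` in `R` equals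
`(I : s)` for some `s ∈ S`, then `I` is an `S`-prime ideal of `R`. -/
theorem stmt_8 {R : Type*} [CommRing R] (S : Submonoid R) (I : Ideal R)
    (hdisj : (I : Set R) ∩ (S : Set R) = ∅)
    (hp : (I.map (algebraMap R (Localization S))).IsPrime)
    (hcolon : ∃ s ∈ S, ∀ x : R,
      x ∈ (I.map (algebraMap R (Localization S))).comap (algebraMap R (Localization S)) ↔
        s * x ∈ I) :
    ∃ s ∈ S, ∀ x y : R, x * y ∈ I → s * x ∈ I ∨ s * y ∈ I := by
  obtain ⟨s, hs, hcol⟩ := hcolon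
  refine ⟨s, hs, fun x y hxy => ?_⟩
  have hmem : algebraMap R (Localization S) x * algebraMap R (Localization S) y ∈
      I.map (algebraMap R (Localization S)) := by
    rw [← map_mul]; exact Ideal.mem_map_of_mem _ hxy
  rcases hp.mem_or_mem hmem with h | h
  · exact Or.inl ((hcol x).mp h)
  · exact Or.inr ((hcol y).mp h)
end

section
/- Let R be a commutative ring, S a multiplicative subset of R, and let I and J be ideals of R with J ⊆ I. Let S̄ denote the image of S under the quotient map R → R/J, a multiplicative subset of R/J. Assume J ∩ S = ∅ and (I/J) ∩ S̄ = ∅, where I/J is the image of I in R/J. If I is an S-prime ideal of R, then I/J is an S̄-prime ideal of R/J. -/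
/-- If `J ⊆ I` are ideals of `R` with `J ∩ S = ∅` and `(I/J) ∩ S̄ = ∅`, and `I` is an
`S`-prime ideal of `R`, then `I/J` is an `S̄`-prime ideal of `R/J`, where `S̄` is the
image of `S` in `R/J`. -/
theorem stmt_9 {R : Type*} [CommRing R] (S : Submonoid R) (I J : Ideal R)
    (hJI : J ≤ I)
    (hJS : (J : Set R) ∩ (S : Set R) = ∅)
    (hIS : ((I.map (Ideal.Quotient.mk J) : Ideal (R ⧸ J)) : Set (R ⧸ J)) ∩
      ((S.map (Ideal.Quotient.mk J).toMonoidHom : Submonoid (R ⧸ J)) : Set (R ⧸ J)) = ∅)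
    (hdisj : (I : Set R) ∩ (S : Set R) = ∅)
    (hSprime : ∃ s ∈ S, ∀ x y : R, x * y ∈ I → s * x ∈ I ∨ s * y ∈ I) :
    ∃ s ∈ S.map (Ideal.Quotient.mk J).toMonoidHom, ∀ x y : R ⧸ J,
      x * y ∈ I.map (Ideal.Quotient.mk J) →
        s * x ∈ I.map (Ideal.Quotient.mk J) ∨ s * y ∈ I.map (Ideal.Quotient.mk J) := by
  obtain ⟨s, hs, hprime⟩ := hSprime
  refine ⟨Ideal.Quotient.mk J s, ⟨s, hs, rfl⟩, ?_⟩
  intro x y hxy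
  obtain ⟨a, rfl⟩ := Ideal.Quotient.mk_surjective x
  obtain ⟨b, rfl⟩ := Ideal.Quotient.mk_surjective y
  have key : ∀ r : R, Ideal.Quotient.mk J r ∈ I.map (Ideal.Quotient.mk J) ↔ r ∈ I := by
    intro r
    rw [Ideal.mem_quotient_iff_mem_sup, sup_eq_left.mpr hJI]
  rw [← map_mul, key] at hxy
  rcases hprime a b hxy with h | h
  · exact Or.inl (by rw [← map_mul, key]; exact h)
  · exact Or.inr (by rw [← map_mul, key]; exact h)
end

section
/- Let R₁ and R₂ be commutative rings, S₁ a multiplicative subset of R₁, S₂ a multiplicative subset of R₂, and let S = S₁ × S₂, a multiplicative subset of the product ring R₁ × R₂. Let I₁ be an ideal of R₁ with I₁ ∩ S₁ = ∅. Then I₁ is an S₁-prime ideal of R₁ if and only if I₁ × R₂ is an S-prime ideal of R₁ × R₂. -/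
/-- `I₁` is an `S₁`-prime ideal of `R₁` iff `I₁ × R₂` is an `S₁ × S₂`-prime ideal of
`R₁ × R₂`. -/
theorem stmt_10 {R₁ R₂ : Type*} [CommRing R₁] [CommRing R₂]
    (S₁ : Submonoid R₁) (S₂ : Submonoid R₂) (I₁ : Ideal R₁)
    (hdisj : (I₁ : Set R₁) ∩ (S₁ : Set R₁) = ∅) :
    (∃ s ∈ S₁, ∀ x y : R₁, x * y ∈ I₁ → s * x ∈ I₁ ∨ s * y ∈ I₁) ↔
      (((I₁.prod (⊤ : Ideal R₂)) : Set (R₁ × R₂)) ∩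
          ((S₁.prod S₂ : Submonoid (R₁ × R₂)) : Set (R₁ × R₂)) = ∅ ∧
        ∃ s ∈ S₁.prod S₂, ∀ x y : R₁ × R₂, x * y ∈ I₁.prod (⊤ : Ideal R₂) →
          s * x ∈ I₁.prod (⊤ : Ideal R₂) ∨ s * y ∈ I₁.prod (⊤ : Ideal R₂)) := by
  constructor
  · rintro ⟨s, hs, h⟩
    refine ⟨?_, ⟨(s, 1), ⟨hs, S₂.one_mem⟩, ?_⟩⟩
    · ext ⟨a, b⟩
      simp only [Set.mem_inter_iff, Set.mem_empty_iff_false, iff_false, not_and]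
      intro hi hsp
      have : a ∈ (I₁ : Set R₁) ∩ (S₁ : Set R₁) := ⟨((Ideal.mem_prod _ _).mp hi).1, hsp.1⟩
      rw [hdisj] at this
      exact this
    · rintro ⟨x1, x2⟩ ⟨y1, y2⟩ hxy
      have h1 : x1 * y1 ∈ I₁ := ((Ideal.mem_prod _ _).mp hxy).1
      rcases h x1 y1 h1 with h' | h'
      · exact Or.inl ((Ideal.mem_prod _ _).mpr ⟨h', trivial⟩)
      · exact Or.inr ((Ideal.mem_prod _ _).mpr ⟨h', trivial⟩)
  · rintro ⟨-, ⟨s1, s2⟩, ⟨hs1, hs2⟩, h⟩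
    refine ⟨s1, hs1, fun x y hxy => ?_⟩
    rcases h (x, 0) (y, 0) ((Ideal.mem_prod _ _).mpr ⟨hxy, trivial⟩) with h' | h'
    · exact Or.inl ((Ideal.mem_prod _ _).mp h').1
    · exact Or.inr ((Ideal.mem_prod _ _).mp h').1
end

section
/- Let ι be a finite index type, and for each i ∈ ι let Rᵢ be a commutative ring and Sᵢ a multiplicative subset of Rᵢ. Let S = Π Sᵢ be the product multiplicative subset of the product ring Π Rᵢ. Fix j ∈ ι. If I is an Sⱼ-prime ideal of Rⱼ, then the ideal {f ∈ Π Rᵢ | f(j) ∈ I} is an S-prime ideal of Π Rᵢ. -/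
/-- For a finite family of rings `R i` with multiplicative subsets `S i`, if `I` is an
`S j`-prime ideal of `R j`, then `{f | f j ∈ I}` is a `Π S i`-prime ideal of `Π R i`. -/
theorem stmt_11 {ι : Type*} [Finite ι] (R : ι → Type*) [∀ i, CommRing (R i)]
    (S : ∀ i, Submonoid (R i)) (j : ι) (I : Ideal (R j))
    (hdisj : (I : Set (R j)) ∩ (S j : Set (R j)) = ∅)
    (hSprime : ∃ s ∈ S j, ∀ x y : R j, x * y ∈ I → s * x ∈ I ∨ s * y ∈ I) :
    ((I.comap (Pi.evalRingHom R j) : Ideal (∀ i, R i)) : Set (∀ i, R i)) ∩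
        ((Submonoid.pi Set.univ S : Submonoid (∀ i, R i)) : Set (∀ i, R i)) = ∅ ∧
      ∃ s ∈ Submonoid.pi Set.univ S, ∀ x y : ∀ i, R i,
        x * y ∈ I.comap (Pi.evalRingHom R j) →
          s * x ∈ I.comap (Pi.evalRingHom R j) ∨ s * y ∈ I.comap (Pi.evalRingHom R j) := by
  classical
  obtain ⟨s0, hs0, hp⟩ := hSprime
  constructor
  · ext f
    simp only [Set.mem_inter_iff, Set.mem_empty_iff_false, iff_false, not_and]
    intro hf hfS
    have : f j ∈ (I : Set (R j)) ∩ (S j : Set (R j)) :=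
      ⟨hf, hfS j (Set.mem_univ j)⟩
    rw [hdisj] at this
    exact this
  · refine ⟨Function.update (1 : ∀ i, R i) j s0, ?_, ?_⟩
    · intro i _
      by_cases h : i = j
      · subst h; simpa using hs0
      · simpa [Function.update_of_ne h] using (S i).one_mem
    · intro x y hxy
      have := hp (x j) (y j) hxy
      rcases this with h | h
      · left
        show (Function.update (1 : ∀ i, R i) j s0 * x) j ∈ I
        simpa using h
      · right
        show (Function.update (1 : ∀ i, R i) j s0 * y) j ∈ I
        simpa using h
end

section
/- Let R be a commutative ring, S a multiplicative subset of R, and I an ideal of R with I ∩ S = ∅. Then I is an S-primary ideal of R if and only if there exists s ∈ S such that the ideal (I : s) = {x ∈ R | s*x ∈ I} is a primary ideal of R. -/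
/-- `I` is `S`-primary iff there exists `s ∈ S` such that the ideal
`(I : s) = {x | s*x ∈ I}` is a primary ideal of `R`. -/
theorem stmt_13 {R : Type*} [CommRing R] (S : Submonoid R) (I : Ideal R)
    (hdisj : (I : Set R) ∩ (S : Set R) = ∅) :
    (∃ s ∈ S, ∀ x y : R, x * y ∈ I → s * x ∈ I ∨ s * y ∈ I.radical) ↔
      ∃ s ∈ S, ∃ J : Ideal R, (∀ x : R, x ∈ J ↔ s * x ∈ I) ∧ J.IsPrimary := by
  have hdisj' : ∀ a : R, a ∈ I → a ∈ S → False := by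
    intro a haI haS
    have : a ∈ (I : Set R) ∩ (S : Set R) := ⟨haI, haS⟩
    rw [hdisj] at this
    exact this
  constructor
  · rintro ⟨s, hs, h⟩
    refine ⟨s, hs, {
      carrier := {x | s * x ∈ I}
      add_mem' := fun {a b} ha hb => by
        simp only [Set.mem_setOf_eq] at *
        rw [mul_add]; exact I.add_mem ha hb
      zero_mem' := by simp only [Set.mem_setOf_eq, mul_zero]; exact I.zero_mem
      smul_mem' := fun c x hx => by
        simp only [Set.mem_setOf_eq, smul_eq_mul] at *
        rw [show s * (c * x) = c * (s * x) by ring]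
        exact I.mul_mem_left c hx }, fun x => Iff.rfl, ?_⟩
    rw [Ideal.isPrimary_iff]
    constructor
    · intro htop
      have h1 : s * 1 ∈ I := by
        have : (1 : R) ∈ (⊤ : Ideal R) := Submodule.mem_top
        rw [← htop] at this
        exact this
      rw [mul_one] at h1
      exact hdisj' s h1 hs
    · intro x y hxy
      simp only [Submodule.mem_mk, AddSubmonoid.mem_mk, AddSubsemigroup.mem_mk,
        Set.mem_setOf_eq] at hxy ⊢
      have hx : x * (s * y) ∈ I := by rw [show x * (s * y) = s * (x * y) by ring]; exact hxy
      rcases h x (s * y) hx with hx1 | hy1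
      · left; exact hx1
      · rw [Ideal.mem_radical_iff] at hy1
        obtain ⟨n, hn⟩ := hy1
        have key : y ^ n * (s * s) ^ n ∈ I := by
          rw [show y ^ n * (s * s) ^ n = (s * (s * y)) ^ n by ring]
          exact hn
        rcases h (y ^ n) ((s * s) ^ n) key with h2 | h3
        · right
          rw [Ideal.mem_radical_iff]
          exact ⟨n, by simpa using h2⟩
        · exfalso
          rw [Ideal.mem_radical_iff] at h3
          obtain ⟨m, hm⟩ := h3
          have hmem : (s * (s * s) ^ n) ^ m ∈ S :=
            pow_mem (mul_mem hs (pow_mem (mul_mem hs hs) n)) m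
          exact hdisj' _ hm hmem
  · rintro ⟨s, hs, J, hJ, hJprim⟩
    refine ⟨s, hs, fun x y hxy => ?_⟩
    have hxyJ : x * y ∈ J := (hJ _).2 (I.mul_mem_left s hxy)
    rcases (Ideal.isPrimary_iff.mp hJprim).2 hxyJ with hx | hy
    · left; exact (hJ x).1 hx
    · right
      rw [Ideal.mem_radical_iff] at hy
      obtain ⟨n, hn⟩ := hy
      cases n with
      | zero =>
        exfalso
        rw [pow_zero] at hn
        exact (Ideal.isPrimary_iff.mp hJprim).1 ((Ideal.eq_top_iff_one J).2 hn)
      | succ m =>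
        rw [Ideal.mem_radical_iff]
        refine ⟨m + 1, ?_⟩
        have hsy : s * y ^ (m + 1) ∈ I := (hJ _).1 hn
        rw [show (s * y) ^ (m + 1) = s ^ m * (s * y ^ (m + 1)) by ring]
        exact I.mul_mem_left _ hsy
end

section
/- Let R be a commutative ring, S a multiplicative subset of R, and I an S-primary ideal of R. Then the radical √I is an S-prime ideal of R; in particular √I ∩ S = ∅ and there exists s ∈ S such that for all x, y ∈ R, x*y ∈ √I implies s*x ∈ √I or s*y ∈ √I. -/
/-- If `I` is an `S`-primary ideal of `R`, then `√I` is an `S`-prime ideal of `R`. -/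
theorem stmt_14 {R : Type*} [CommRing R] (S : Submonoid R) (I : Ideal R)
    (hdisj : (I : Set R) ∩ (S : Set R) = ∅)
    (hSprimary : ∃ s ∈ S, ∀ x y : R, x * y ∈ I → s * x ∈ I ∨ s * y ∈ I.radical) :
    ((I.radical : Ideal R) : Set R) ∩ (S : Set R) = ∅ ∧
      ∃ s ∈ S, ∀ x y : R, x * y ∈ I.radical →
        s * x ∈ I.radical ∨ s * y ∈ I.radical := by
  have hdisj' : ∀ a, a ∈ I → a ∈ S → False := by
    intro a haI haS
    have : a ∈ (I : Set R) ∩ (S : Set R) := ⟨haI, haS⟩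
    rw [hdisj] at this
    exact this
  constructor
  · ext a
    simp only [Set.mem_inter_iff, Set.mem_empty_iff_false, iff_false, not_and]
    rintro ⟨n, hn⟩ haS
    exact hdisj' _ hn (pow_mem haS n)
  · obtain ⟨s, hsS, hs⟩ := hSprimary
    refine ⟨s, hsS, fun x y hxy => ?_⟩
    obtain ⟨n, hn⟩ := hxy
    rcases Nat.eq_zero_or_pos n with rfl | hn1
    · simp at hn
      exact absurd (hdisj' 1 hn S.one_mem) (fun h => h)
    · rw [mul_pow] at hn
      rcases hs _ _ hn with h | h
      · left
        refine ⟨n, ?_⟩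
        have : (s * x) ^ n = s ^ (n - 1) * (s * x ^ n) := by
          rw [mul_pow, ← mul_assoc, ← pow_succ, Nat.sub_add_cancel hn1]
        rw [this]
        exact I.mul_mem_left _ h
      · right
        rw [← Ideal.radical_idem (I := I)]
        refine ⟨n, ?_⟩
        have : (s * y) ^ n = s ^ (n - 1) * (s * y ^ n) := by
          rw [mul_pow, ← mul_assoc, ← pow_succ, Nat.sub_add_cancel hn1]
        rw [this]
        exact I.radical.mul_mem_left _ h
end

section
/- Let R be a commutative ring, S a multiplicative subset of R, and P an S-prime ideal of R. Let I₁, ..., Iₙ be finitely many (n ≥ 1) S-primary ideals of R such that √Iᵢ = P for every i. Then I = I₁ ∩ ... ∩ Iₙ is an S-primary ideal of R with √I = P. -/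
/-- An intersection of finitely many (at least one) `S`-primary ideals all having the
same associated `S`-prime radical `P` is itself an `S`-primary ideal with radical `P`. -/
theorem stmt_15 {R : Type*} [CommRing R] (S : Submonoid R) (P : Ideal R)
    (hPdisj : (P : Set R) ∩ (S : Set R) = ∅)
    (hPprime : ∃ s ∈ S, ∀ x y : R, x * y ∈ P → s * x ∈ P ∨ s * y ∈ P)
    (n : ℕ) (hn : 1 ≤ n) (I : Fin n → Ideal R)
    (hIdisj : ∀ i, ((I i : Ideal R) : Set R) ∩ (S : Set R) = ∅)
    (hSprimary : ∀ i, ∃ s ∈ S, ∀ x y : R,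
      x * y ∈ I i → s * x ∈ I i ∨ s * y ∈ (I i).radical)
    (hrad : ∀ i, (I i).radical = P) :
    ((iInf I : Ideal R) : Set R) ∩ (S : Set R) = ∅ ∧
      (∃ s ∈ S, ∀ x y : R, x * y ∈ iInf I →
        s * x ∈ iInf I ∨ s * y ∈ (iInf I).radical) ∧
      (iInf I).radical = P := by
  have i0 : Fin n := ⟨0, hn⟩
  -- radical of the intersection is P
  have hradInf : (iInf I).radical = P := by
    apply le_antisymm
    · calc (iInf I).radical ≤ (I i0).radical :=
            Ideal.radical_mono (iInf_le I i0)
        _ = P := hrad i0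
    · intro x hx
      have hmem : ∀ i, x ∈ (I i).radical := fun i => (hrad i).symm ▸ hx
      choose k hk using hmem
      refine ⟨Finset.univ.sup k, ?_⟩
      rw [Ideal.mem_iInf]
      intro i
      have hle : k i ≤ Finset.univ.sup k := Finset.le_sup (Finset.mem_univ i)
      have : x ^ Finset.univ.sup k = x ^ k i * x ^ (Finset.univ.sup k - k i) := by
        rw [← pow_add, Nat.add_sub_cancel' hle]
      rw [this]
      exact Ideal.mul_mem_right _ _ (hk i)
  -- disjointness
  have hdisj : ((iInf I : Ideal R) : Set R) ∩ (S : Set R) = ∅ := by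
    apply Set.eq_empty_of_subset_empty
    intro x hx
    rw [← hIdisj i0]
    exact ⟨(iInf_le I i0 : iInf I ≤ I i0) hx.1, hx.2⟩
  refine ⟨hdisj, ?_, hradInf⟩
  choose s hs hprim using hSprimary
  refine ⟨∏ i, s i, S.prod_mem (fun i _ => hs i), ?_⟩
  intro x y hxy
  by_cases h : ∀ i, (∏ j, s j) * x ∈ I i
  · exact Or.inl (Ideal.mem_iInf.mpr h)
  · push_neg at h
    obtain ⟨i, hi⟩ := h
    have hxyi : x * y ∈ I i := Ideal.mem_iInf.mp hxy i
    rcases hprim i x y hxyi with h1 | h2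
    · exfalso
      apply hi
      have : (∏ j, s j) = (∏ j ∈ Finset.univ.erase i, s j) * s i := by
        rw [Finset.prod_erase_mul _ _ (Finset.mem_univ i)]
      rw [this, mul_assoc]
      exact Ideal.mul_mem_left _ _ h1
    · right
      rw [hradInf, ← hrad i]
      have : (∏ j, s j) = (∏ j ∈ Finset.univ.erase i, s j) * s i := by
        rw [Finset.prod_erase_mul _ _ (Finset.mem_univ i)]
      rw [this, mul_assoc]
      exact Ideal.mul_mem_left _ _ h2
end

section
/- Let R be a commutative ring, S a multiplicative subset of R, J an ideal of R with J ∩ S ≠ ∅, and I an S-primary ideal of R. Then the product ideal J*I is an S-primary ideal of R (in particular (J*I) ∩ S = ∅). -/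
namespace Ideal

variable {R : Type*} [CommRing R]

/-- The `S`-primary condition on `I` with witness `s`, apart from `s ∈ S`. -/
def IsPrimaryWitness (I : Ideal R) (s : R) : Prop :=
  ∀ x y : R, x * y ∈ I → s * x ∈ I ∨ s * y ∈ I.radical

theorem IsPrimaryWitness.mul_left {I J : Ideal R} {s t : R} (hs : I.IsPrimaryWitness s)
    (ht : t ∈ J) : (J * I).IsPrimaryWitness (t * s) := by
  intro x y hxy
  rcases hs x y (mul_le_right hxy) with hx | hy
  · left
    rw [mul_assoc]
    exact mul_mem_mul ht hx
  · right
    rw [radical_mul, mul_assoc]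
    exact ⟨J.le_radical (J.mul_mem_right _ ht), I.radical.mul_mem_left t hy⟩

end Ideal

/-- If `J ∩ S ≠ ∅` and `I` is an `S`-primary ideal of `R`, then `J*I` is an `S`-primary
ideal of `R`. -/
theorem stmt_16 {R : Type*} [CommRing R] (S : Submonoid R) (I J : Ideal R)
    (hJS : (J : Set R) ∩ (S : Set R) ≠ ∅)
    (hdisj : (I : Set R) ∩ (S : Set R) = ∅)
    (hSprimary : ∃ s ∈ S, ∀ x y : R, x * y ∈ I → s * x ∈ I ∨ s * y ∈ I.radical) :
    ((J * I : Ideal R) : Set R) ∩ (S : Set R) = ∅ ∧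
      ∃ s ∈ S, ∀ x y : R, x * y ∈ J * I →
        s * x ∈ J * I ∨ s * y ∈ (J * I).radical := by
  obtain ⟨t, htJ, htS⟩ := Set.nonempty_iff_ne_empty.2 hJS
  obtain ⟨s, hsS, hs⟩ := hSprimary
  refine ⟨Set.subset_eq_empty (Set.inter_subset_inter_left _ Ideal.mul_le_right) hdisj,
    t * s, S.mul_mem htS hsS, ?_⟩
  exact Ideal.IsPrimaryWitness.mul_left hs htJ
end

section
/- Let R be a commutative ring and S a multiplicative subset of R. If I is an S-primary ideal of R with I ∩ S = ∅, then the ideal S⁻¹I of the localization S⁻¹R (the pushforward of I along the canonical map R → S⁻¹R) is a primary ideal of S⁻¹R. -/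
namespace Ideal

variable {R : Type*} [CommRing R]

def IsSPrimary (S : Submonoid R) (I : Ideal R) : Prop :=
  Disjoint (S : Set R) I ∧ ∃ s ∈ S, ∀ x y : R, x * y ∈ I → s * x ∈ I ∨ s * y ∈ I.radical

/-- The defect `s` of an `S`-primary ideal becomes a unit in `S⁻¹R`, so it disappears there. -/
theorem IsSPrimary.isPrimary_map {S : Submonoid R} {I : Ideal R} (hI : I.IsSPrimary S)
    (A : Type*) [CommRing A] [Algebra R A] [IsLocalization S A] :
    (I.map (algebraMap R A)).IsPrimary := by
  obtain ⟨hdisj, s, hsS, hs⟩ := hI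
  refine isPrimary_iff.mpr
    ⟨(IsLocalization.map_algebraMap_ne_top_iff_disjoint S A I).mpr hdisj, ?_⟩
  intro x y hxy
  obtain ⟨a, t, rfl⟩ := IsLocalization.exists_mk'_eq S x
  obtain ⟨b, u, rfl⟩ := IsLocalization.exists_mk'_eq S y
  rw [← IsLocalization.mk'_mul, IsLocalization.mk'_mem_map_algebraMap_iff] at hxy
  obtain ⟨w, hwS, hw⟩ := hxy
  rcases hs (w * a) b (by rwa [mul_assoc]) with hwa | ⟨n, hbn⟩
  · left
    rw [IsLocalization.mk'_mem_map_algebraMap_iff]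
    exact ⟨s * w, S.mul_mem hsS hwS, by rwa [mul_assoc]⟩
  · right
    refine ⟨n, ?_⟩
    rw [← IsLocalization.mk'_pow, IsLocalization.mk'_mem_map_algebraMap_iff]
    exact ⟨s ^ n, S.pow_mem hsS n, by rwa [← mul_pow]⟩

end Ideal

/-- If `I` is an `S`-primary ideal of `R` disjoint from `S`, then `S⁻¹I` is a primary
ideal of the localization `S⁻¹R`. -/
theorem stmt_17 {R : Type*} [CommRing R] (S : Submonoid R) (I : Ideal R)
    (hdisj : (I : Set R) ∩ (S : Set R) = ∅)
    (hSprimary : ∃ s ∈ S, ∀ x y : R, x * y ∈ I → s * x ∈ I ∨ s * y ∈ I.radical) :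
    (I.map (algebraMap R (Localization S))).IsPrimary :=
  Ideal.IsSPrimary.isPrimary_map
    ⟨(Set.disjoint_iff_inter_eq_empty.mpr hdisj).symm, hSprimary⟩ (Localization S)
end

section
/- Let R be a commutative ring, S a multiplicative subset of R, and I an ideal of R with I ∩ S = ∅. If the ideal S⁻¹I of the localization S⁻¹R is a primary ideal and the preimage of S⁻¹I under the canonical map R → S⁻¹R equals (I : s) = {x ∈ R | s*x ∈ I} for some s ∈ S, then I is an S-primary ideal of R. -/
/-- If `S⁻¹I` is a primary ideal of `S⁻¹R` and the preimage of `S⁻¹I` in `R` equals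
`(I : s)` for some `s ∈ S`, then `I` is an `S`-primary ideal of `R`. -/
theorem stmt_18 {R : Type*} [CommRing R] (S : Submonoid R) (I : Ideal R)
    (hdisj : (I : Set R) ∩ (S : Set R) = ∅)
    (hp : (I.map (algebraMap R (Localization S))).IsPrimary)
    (hcolon : ∃ s ∈ S, ∀ x : R,
      x ∈ (I.map (algebraMap R (Localization S))).comap (algebraMap R (Localization S)) ↔
        s * x ∈ I) :
    ∃ s ∈ S, ∀ x y : R, x * y ∈ I → s * x ∈ I ∨ s * y ∈ I.radical := by
  obtain ⟨s, hsS, hs⟩ := hcolon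
  refine ⟨s, hsS, fun x y hxy => ?_⟩
  have hmem : algebraMap R (Localization S) x * algebraMap R (Localization S) y ∈
      I.map (algebraMap R (Localization S)) := by
    rw [← map_mul]
    exact Ideal.mem_map_of_mem _ hxy
  obtain ⟨hne, hpr⟩ := Ideal.isPrimary_iff.mp hp
  rcases hpr hmem with h | h
  · exact Or.inl ((hs x).mp (Ideal.mem_comap.mpr h))
  · right
    obtain ⟨n, hn⟩ := Ideal.mem_radical_iff.mp h
    rw [← map_pow] at hn
    have hyn : s * y ^ n ∈ I := (hs (y ^ n)).mp (Ideal.mem_comap.mpr hn)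
    rcases Nat.eq_zero_or_pos n with rfl | hn0
    · exfalso
      apply hne
      rw [Ideal.eq_top_iff_one]
      simpa using hn
    · refine ⟨n, ?_⟩
      have : (s * y) ^ n = s ^ (n - 1) * (s * y ^ n) := by
        rw [mul_pow, ← mul_assoc, ← pow_succ, Nat.sub_add_cancel hn0]
      rw [this]
      exact I.mul_mem_left _ hyn
end
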